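/- Let p be prime and n coprime to p. Then every cyclic code of length n over R_k = Z_p[u]/(u^k) is a principal ideal in R_k[x]/(x^n - 1). -/

import Mathlib

open Polynomial

noncomputable section

/-- `Ru p k` is the ring `R_k = Z_p[u]/(u^k)`. -/
abbrev Ru (p k : ℕ) : Type := Polynomial (ZMod p) ⧸ Ideal.span {(X : Polynomial (ZMod p)) ^ k}

instance instCommRingRu (p k : ℕ) : CommRing (Ru p k) := Ideal.Quotient.commRing _

/-- The element `u` of `Ru p k`. -/
abbrev uR (p k : ℕ) : Ru p k := Ideal.Quotient.mk _ (X : Polynomial (ZMod p))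

/-- `Rn p k n` is the ring `R_k[x]/(x^n - 1)`; its ideals are the cyclic codes of length `n`. -/
abbrev Rn (p k n : ℕ) : Type :=
  Polynomial (Ru p k) ⧸ Ideal.span {(X : Polynomial (Ru p k)) ^ n - 1}

/-- The natural ring map `Z_p[x] → R_k[x]/(x^n - 1)`. -/
abbrev liftP (p k n : ℕ) : Polynomial (ZMod p) →+* Rn p k n :=
  (Ideal.Quotient.mk _).comp (mapRingHom (algebraMap (ZMod p) (Ru p k)))

/-- `u` as an element of `R_k[x]/(x^n - 1)`. -/
abbrev uu (p k n : ℕ) : Rn p k n := Ideal.Quotient.mk _ (C (uR p k))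

/-- `x` as an element of `R_k[x]/(x^n - 1)`. -/
abbrev xx (p k n : ℕ) : Rn p k n := Ideal.Quotient.mk _ (X : Polynomial (Ru p k))

/-!
Since `p ∤ n`, the polynomial `x ^ n - 1` is squarefree over `Z_p`, so `A = Z_p[x]/(x^n - 1)` is
a reduced Artinian ring, i.e. a finite product of fields `∏ Kᵢ`. Hence `A[u] ≅ ∏ Kᵢ[u]` is a
principal ideal ring, and so is its quotient `R_k[x]/(x^n - 1)` (sending the variable `u` of `A[u]` to `u`).
-/

namespace Polynomial

attribute [local instance] IsArtinianRing.fieldOfSubtypeIsMaximal in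
theorem isPrincipalIdealRing_of_isArtinianRing_of_isReduced (R : Type*) [CommRing R]
    [IsArtinianRing R] [IsReduced R] : IsPrincipalIdealRing R[X] :=
  .of_surjective
    ((mapEquiv (IsArtinianRing.equivPi R).toRingEquiv).trans (piEquiv _)).symm.toRingHom
    (RingEquiv.surjective _)

variable {K : Type*} [Field K]

theorem isReduced_quotient_span_of_squarefree {g : K[X]} (hg : Squarefree g) :
    IsReduced (K[X] ⧸ Ideal.span {g}) :=
  (Ideal.isRadical_iff_quotient_reduced _).mp (isRadical_iff_span_singleton.mp hg.isRadical)

theorem isArtinianRing_quotient_span {g : K[X]} (hg : g ≠ 0) :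
    IsArtinianRing (K[X] ⧸ Ideal.span {g}) :=
  have : Module.Finite K (AdjoinRoot g) := (AdjoinRoot.powerBasis hg).finite
  IsArtinianRing.of_finite K (AdjoinRoot g)

theorem squarefree_X_pow_sub_one {n : ℕ} (hn : (n : K) ≠ 0) :
    Squarefree (X ^ n - 1 : K[X]) := by
  simpa using (separable_X_pow_sub_C (1 : K) hn one_ne_zero).squarefree

theorem exists_surjective_quotient_span_map {B : Type*} [CommRing B] [Algebra K B] {u : B}
    (hu : Function.Surjective (aeval (R := K) u)) (g : K[X]) :
    ∃ f : (K[X] ⧸ Ideal.span {g})[X] →+* B[X] ⧸ Ideal.span {g.map (algebraMap K B)},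
      Function.Surjective f := by
  have hle : Ideal.span {g} ≤
      (Ideal.span {g.map (algebraMap K B)}).comap (mapRingHom (algebraMap K B)) := by
    rw [← Ideal.map_le_iff_le_comap, Ideal.map_span, Set.image_singleton]
    rfl
  let Φ := eval₂RingHom (Ideal.quotientMap _ _ hle) (Ideal.Quotient.mk _ (C u))
  refine ⟨Φ, Function.Surjective.of_comp (g := mapRingHom (Ideal.Quotient.mk _)) ?_⟩
  -- On `K[X][X]`, `Φ` is "swap the two variables, evaluate the inner one at `u`, reduce mod `g`".
  have hΦ : Φ.comp (mapRingHom (Ideal.Quotient.mk _)) = (Ideal.Quotient.mk _).comp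
      ((mapRingHom (aeval (R := K) u).toRingHom).comp Bivariate.swap.toRingEquiv.toRingHom) := by
    refine ringHom_ext' (ringHom_ext' (RingHom.ext fun c => ?_) ?_) ?_
    · simp [Φ, Bivariate.swap_C_C]
    · simp [Φ, Bivariate.swap_X]
    · simp [Φ, Bivariate.swap_Y]
  rw [← RingHom.coe_comp, hΦ]
  exact Ideal.Quotient.mk_surjective.comp ((map_surjective _ hu).comp Bivariate.swap.surjective)

theorem isPrincipalIdealRing_quotient_span_map {B : Type*} [CommRing B] [Algebra K B] {u : B}
    (hu : Function.Surjective (aeval (R := K) u)) {g : K[X]} (hg : Squarefree g) :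
    IsPrincipalIdealRing (B[X] ⧸ Ideal.span {g.map (algebraMap K B)}) := by
  have := isReduced_quotient_span_of_squarefree hg
  have := isArtinianRing_quotient_span hg.ne_zero
  have := isPrincipalIdealRing_of_isArtinianRing_of_isReduced (K[X] ⧸ Ideal.span {g})
  obtain ⟨f, hf⟩ := exists_surjective_quotient_span_map hu g
  exact .of_surjective f hf

end Polynomial

theorem Ideal.Quotient.aeval_mk_X_surjective {R : Type*} [CommRing R] (I : Ideal R[X]) :
    Function.Surjective (aeval (R := R) (Ideal.Quotient.mk I X)) := by
  intro a
  obtain ⟨q, rfl⟩ := Ideal.Quotient.mk_surjective a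
  exact ⟨q, by rw [← Ideal.Quotient.mkₐ_eq_mk R, aeval_algHom_apply, aeval_X_left_apply]⟩

theorem stmt15_general (p k n : ℕ) (hp : p.Prime)
    (hco : Nat.Coprime n p) (Ck : Ideal (Rn p k n)) :
    ∃ c : Rn p k n, Ck = Ideal.span {c} := by
  have : Fact p.Prime := ⟨hp⟩
  have hsq : Squarefree (X ^ n - 1 : (ZMod p)[X]) := squarefree_X_pow_sub_one
    ((ZMod.natCast_eq_zero_iff n p).not.mpr (hp.coprime_iff_not_dvd.mp hco.symm))
  have hmap : (X ^ n - 1 : (ZMod p)[X]).map (algebraMap (ZMod p) (Ru p k)) = X ^ n - 1 := by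
    simp
  have hu : Function.Surjective (aeval (R := ZMod p) (uR p k)) :=
    Ideal.Quotient.aeval_mk_X_surjective (Ideal.span {X ^ k})
  have hPIR := isPrincipalIdealRing_quotient_span_map hu hsq
  rw [hmap] at hPIR
  exact (IsPrincipalIdealRing.principal Ck).principal

/-- If `gcd(n, p) = 1`, every cyclic code of length `n` over
`R_k = Z_p[u]/(u^k)`, i.e. every ideal of `R_k[x]/(x^n - 1)`, is principal. -/
theorem stmt15 (p k n : ℕ) (hp : p.Prime) (hk : 1 ≤ k) (hn : 0 < n)
    (hco : Nat.Coprime n p) (Ck : Ideal (Rn p k n)) :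
    ∃ c : Rn p k n, Ck = Ideal.span {c} :=
  stmt15_general p k n hp hco Ck
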